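/- arXiv:2109.07948 — 2 statements merged into one kernel-verified Lean document; each statement's English description precedes it below -/
import Mathlib

section
/- Let P = (V, ≤) be a poset, G its incomparability graph, X ⊆ V, and r ∈ ℕ. If X is an initial segment (downward closed set) of P, then B_G(X, r) := {v ∈ V : d_G(v, x) ≤ r for some x ∈ X} is an initial segment of P. -/
/-!
Walking from `y` towards `X` along incomparability edges, a vertex `x ≤ y` can follow the same walk:
at each edge `y — w`, either `x` is incomparable to `w` as well, or `x ≤ w` (since `w ≤ x ≤ y` is
impossible), in which case `x` may stay put while the walk moves on to `w`.
-/

/-- The incomparability graph of a poset: edges are pairs of incomparable elements. -/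
def incompGraph (V : Type*) [PartialOrder V] : SimpleGraph V where
  Adj a b := ¬ a ≤ b ∧ ¬ b ≤ a
  symm := ⟨fun a b h => ⟨h.2, h.1⟩⟩
  loopless := ⟨fun a h => h.1 le_rfl⟩

/-- `ballSet G X r` is the set of vertices at graphic distance at most `r`
from some vertex of `X` (distance `⊤` if no path exists). -/
def ballSet {V : Type*} (G : SimpleGraph V) (X : Set V) (r : ℕ) : Set V :=
  {v | ∃ x ∈ X, G.edist v x ≤ (r : ℕ∞)}

namespace incompGraph

variable {V : Type*} [PartialOrder V] {X : Set V} {x y z : V}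

theorem adj_or_le_of_le_of_adj {w : V} (hxy : x ≤ y) (hyw : (incompGraph V).Adj y w) :
    (incompGraph V).Adj x w ∨ x ≤ w := by
  by_cases hxw : x ≤ w
  · exact .inr hxw
  · exact .inl ⟨hxw, fun hwx => hyw.2 (hwx.trans hxy)⟩

theorem exists_edist_le_length_of_le (hX : IsLowerSet X) (hz : z ∈ X)
    (p : (incompGraph V).Walk y z) (hxy : x ≤ y) :
    ∃ z' ∈ X, (incompGraph V).edist x z' ≤ p.length := by
  induction p generalizing x with
  | nil => exact ⟨x, hX hxy hz, by simp⟩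
  | @cons y w z hyw q ih =>
    rcases adj_or_le_of_le_of_adj hxy hyw with hxw | hxw
    · exact ⟨z, hz, SimpleGraph.edist_le (.cons hxw q)⟩
    · obtain ⟨z', hz', hd⟩ := ih hz hxw
      exact ⟨z', hz', hd.trans (by simp)⟩

theorem exists_edist_le_edist_of_le (hX : IsLowerSet X) (hz : z ∈ X) (hxy : x ≤ y) :
    ∃ z' ∈ X, (incompGraph V).edist x z' ≤ (incompGraph V).edist y z := by
  by_cases hyz : (incompGraph V).edist y z = ⊤
  · exact ⟨z, hz, hyz ▸ le_top⟩
  · obtain ⟨p, hp⟩ := SimpleGraph.exists_walk_of_edist_ne_top hyz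
    exact hp ▸ exists_edist_le_length_of_le hX hz p hxy

theorem isLowerSet_ballSet (hX : IsLowerSet X) (r : ℕ) :
    IsLowerSet (ballSet (incompGraph V) X r) := by
  rintro y x hxy ⟨z, hz, hd⟩
  obtain ⟨z', hz', hd'⟩ := exists_edist_le_edist_of_le hX hz hxy
  exact ⟨z', hz', hd'.trans hd⟩

end incompGraph

theorem stmt4 {V : Type*} [PartialOrder V] (X : Set V) (r : ℕ)
    (hX : ∀ x y : V, x ≤ y → y ∈ X → x ∈ X) :
    ∀ x y : V, x ≤ y → y ∈ ballSet (incompGraph V) X r → x ∈ ballSet (incompGraph V) X r :=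
  fun _ _ hxy hy => incompGraph.isLowerSet_ballSet (fun _ _ => hX _ _) r hxy hy
end

section
/- Let P = (V, ≤) be a poset, G its incomparability graph, X ⊆ V order convex, and r ∈ ℕ. Then B_G(X, r) := {v ∈ V : d_G(v, x) ≤ r for some x ∈ X} is order convex in P. -/
/-- A subset of a poset is order convex if it contains every element between two of its members. -/
def OrderConvex {V : Type*} [PartialOrder V] (X : Set V) : Prop :=
  ∀ x ∈ X, ∀ y ∈ X, ∀ z : V, x ≤ z → z ≤ y → z ∈ X

/-!
Let `x ≤ z ≤ y` with `x` within distance `r` of `a ∈ X` and `y` within distance `r` of `b ∈ X`.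
Follow a shortest path from `x` to `a`. As long as its vertices stay below `z` nothing happens;
the first vertex `v` leaving the down-set of `z` cannot lie above `z` (its predecessor is below `z`
and incomparable to `v`), so `v` is incomparable to `z`, and then `d(z, a) ≤ 1 + d(v, a) ≤ d(x, a)`.
Hence either `a ≤ z` or `z` is within distance `r` of `a`; dually, either `z ≤ b` or `z` is within
distance `r` of `b`. In the remaining case `a ≤ z ≤ b`, so `z ∈ X` by convexity.
-/

namespace incompGraph

variable {V : Type*} [PartialOrder V]

lemma le_or_edist_le_length {x a z : V} (p : (incompGraph V).Walk x a) (hxz : x ≤ z) :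
    a ≤ z ∨ (incompGraph V).edist z a ≤ p.length := by
  induction p with
  | nil => exact Or.inl hxz
  | @cons x v a hxv q ih =>
    by_cases hzv : (incompGraph V).Adj z v
    · right
      calc (incompGraph V).edist z a
          ≤ (incompGraph V).edist z v + (incompGraph V).edist v a := SimpleGraph.edist_triangle
        _ ≤ 1 + q.length := by
          gcongr
          · exact (SimpleGraph.edist_eq_one_iff_adj.mpr hzv).le
          · exact SimpleGraph.edist_le q
        _ = (SimpleGraph.Walk.cons hxv q).length := by
          simp [SimpleGraph.Walk.length_cons, add_comm]
    · have hvz : v ≤ z := by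
        by_contra hvz
        exact hzv ⟨fun hzv' => hxv.1 (hxz.trans hzv'), hvz⟩
      refine (ih hvz).imp_right fun h => h.trans ?_
      exact_mod_cast (q.length).le_succ

lemma le_or_edist_le_edist {x z : V} (hxz : x ≤ z) (a : V) :
    a ≤ z ∨ (incompGraph V).edist z a ≤ (incompGraph V).edist x a := by
  by_cases hxa : (incompGraph V).edist x a = ⊤
  · exact Or.inr (hxa ▸ le_top)
  obtain ⟨p, hp⟩ := SimpleGraph.exists_walk_of_edist_ne_top hxa
  exact hp ▸ le_or_edist_le_length p hxz

lemma edist_toDual (a b : V) :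
    (incompGraph Vᵒᵈ).edist (OrderDual.toDual a) (OrderDual.toDual b) =
      (incompGraph V).edist a b := by
  have h : incompGraph Vᵒᵈ = incompGraph V := by
    ext u v
    exact and_comm
  rw [h]
  rfl

lemma le_or_edist_le_edist_of_le {y z : V} (hzy : z ≤ y) (b : V) :
    z ≤ b ∨ (incompGraph V).edist z b ≤ (incompGraph V).edist y b := by
  simpa only [edist_toDual, OrderDual.toDual_le_toDual] using
    le_or_edist_le_edist (V := Vᵒᵈ) (OrderDual.toDual_le_toDual.mpr hzy) (OrderDual.toDual b)

end incompGraph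

theorem stmt5 {V : Type*} [PartialOrder V] (X : Set V) (r : ℕ)
    (hX : OrderConvex X) :
    OrderConvex (ballSet (incompGraph V) X r) := by
  rintro x ⟨a, haX, hxa⟩ y ⟨b, hbX, hyb⟩ z hxz hzy
  rcases incompGraph.le_or_edist_le_edist hxz a with haz | hza
  · rcases incompGraph.le_or_edist_le_edist_of_le hzy b with hzb | hzb
    · exact ⟨z, hX a haX b hbX z haz hzb, by simp⟩
    · exact ⟨b, hbX, hzb.trans hyb⟩
  · exact ⟨a, haX, hza.trans hxa⟩
end
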